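/- Let α be a real number with 0 ≤ α < 1 and let n ≥ 3 be an integer. Then λ_α(K_1 ∨ (K_{n−2} ∪ K_1)) is the largest real root of the cubic polynomial φ(x) = x³ − (αn + n + α − 3)x² + (αn² + α²n − αn − n − 2α + 1)x − α²n² + 3α²n − αn + n − 4α² + 5α − 3. -/

import Mathlib

open SimpleGraph

/-- The `Aα`-matrix of a finite simple graph: `Aα(G) = α·D(G) + (1-α)·A(G)`. -/
noncomputable def aAlphaMatrix {V : Type*} [Finite V] (α : ℝ) (G : SimpleGraph V) :
    Matrix V V ℝ :=
  letI := Fintype.ofFinite V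
  letI := Classical.decEq V
  letI : DecidableRel G.Adj := Classical.decRel _
  α • Matrix.diagonal (fun v => (G.degree v : ℝ)) + (1 - α) • (G.adjMatrix ℝ)

/-- The `Aα`-spectral radius: the largest eigenvalue of `Aα(G)` (the supremum of its real
spectrum; all eigenvalues of this symmetric matrix are real). -/
noncomputable def lambdaAlpha {V : Type*} [Finite V] (α : ℝ) (G : SimpleGraph V) : ℝ :=
  letI := Fintype.ofFinite V
  letI := Classical.decEq V
  sSup (spectrum ℝ (aAlphaMatrix α G))

/-- The join `G ∨ H` of two graphs on disjoint vertex sets. -/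
def graphJoin {V W : Type*} (G : SimpleGraph V) (H : SimpleGraph W) : SimpleGraph (V ⊕ W) where
  Adj x y :=
    match x, y with
    | Sum.inl a, Sum.inl b => G.Adj a b
    | Sum.inr a, Sum.inr b => H.Adj a b
    | Sum.inl _, Sum.inr _ => True
    | Sum.inr _, Sum.inl _ => True
  symm := by
    refine ⟨?_⟩
    rintro (a | a) (b | b) h
    · exact G.adj_symm h
    · trivial
    · trivial
    · exact H.adj_symm h
  loopless := by
    refine ⟨?_⟩
    rintro (a | a) h
    · exact G.irrefl h
    · exact H.irrefl h

/-- `G` has an `H`-factor where `H` consists of the paths `P_k` for `k ∈ ks`: a spanning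
subgraph all of whose connected components are paths `P_k` with `k ∈ ks`. -/
def HasPathFactor {V : Type*} (G : SimpleGraph V) (ks : Set ℕ) : Prop :=
  ∃ F : SimpleGraph V, F ≤ G ∧
    ∀ c : F.ConnectedComponent, ∃ k ∈ ks, Nonempty ((F.induce c.supp) ≃g pathGraph k)

/-- `K_1 ∨ (K_{n-2} ∪ K_1)`. -/
def specialGraph (n : ℕ) : SimpleGraph (Fin 1 ⊕ (Fin (n - 2) ⊕ Fin 1)) :=
  graphJoin (⊤ : SimpleGraph (Fin 1))
    ((⊤ : SimpleGraph (Fin (n - 2))) ⊕g (⊤ : SimpleGraph (Fin 1)))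

/-! The vertex set splits into the apex, the clique `K_{n-2}` and the pendant vertex, and this
partition is equitable for `Aα`: on vectors constant on the three blocks, `Aα` acts by a `3 × 3`
quotient matrix whose characteristic polynomial is `φ`. An eigenvector that is not constant on the
clique has eigenvalue `α (n - 1) - 1`, so every eigenvalue is either that number or a root of `φ`,
and every root of `φ` is an eigenvalue. Since `φ (n - 2) < 0 < φ (n - 1)`, `φ` has a root
`≥ n - 2 > α (n - 1) - 1`, hence the largest eigenvalue is the largest root of `φ`. -/

open Matrix

section AAlpha

variable {V : Type*} [Fintype V] [DecidableEq V]

theorem Matrix.mem_spectrum_iff_exists_mulVec_eq_smul {K : Type*} [Field K] (A : Matrix V V K)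
    (μ : K) : μ ∈ spectrum K A ↔ ∃ v ≠ 0, A *ᵥ v = μ • v := by
  rw [spectrum.mem_iff, isUnit_iff_isUnit_det, isUnit_iff_ne_zero, not_ne_iff,
    ← exists_mulVec_eq_zero_iff]
  refine exists_congr fun v => and_congr_right fun _ => ?_
  rw [sub_mulVec, sub_eq_zero, Algebra.algebraMap_eq_smul_one, smul_mulVec, one_mulVec, eq_comm]

theorem aAlphaMatrix_eq (α : ℝ) (G : SimpleGraph V) [DecidableRel G.Adj] :
    aAlphaMatrix α G = α • diagonal (fun v => (G.degree v : ℝ)) + (1 - α) • G.adjMatrix ℝ := by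
  unfold aAlphaMatrix
  congr!

theorem aAlphaMatrix_mulVec_apply (α : ℝ) (G : SimpleGraph V) [DecidableRel G.Adj]
    (v : V → ℝ) (x : V) :
    (aAlphaMatrix α G *ᵥ v) x = ∑ y ∈ G.neighborFinset x, (α * v x + (1 - α) * v y) := by
  simp [aAlphaMatrix_eq, add_mulVec, smul_mulVec, mulVec_diagonal, adjMatrix_mulVec_apply,
    Finset.sum_add_distrib, Finset.mul_sum, mul_left_comm]

theorem aAlphaMatrix_isHermitian (α : ℝ) (G : SimpleGraph V) [DecidableRel G.Adj] :
    (aAlphaMatrix α G).IsHermitian := by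
  simp [IsHermitian, aAlphaMatrix_eq, transpose_add, transpose_smul]

theorem isGreatest_lambdaAlpha [Nonempty V] (α : ℝ) (G : SimpleGraph V) :
    IsGreatest (spectrum ℝ (aAlphaMatrix α G)) (lambdaAlpha α G) := by
  classical
  have hfin := finite_spectrum (aAlphaMatrix α G)
  have hne : (spectrum ℝ (aAlphaMatrix α G)).Nonempty :=
    ⟨_, (aAlphaMatrix_isHermitian α G).eigenvalues_mem_spectrum_real (Classical.arbitrary V)⟩
  have hsup : lambdaAlpha α G = sSup (spectrum ℝ (aAlphaMatrix α G)) := by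
    unfold lambdaAlpha
    congr!
  rw [hsup]
  exact ⟨hne.csSup_mem hfin, fun _ hμ => le_csSup hfin.bddAbove hμ⟩

end AAlpha

noncomputable instance (n : ℕ) : DecidableRel (specialGraph n).Adj := Classical.decRel _

section SpecialGraph

variable {n : ℕ}

theorem sum_neighborFinset_specialGraph_apex (f : Fin 1 ⊕ (Fin (n - 2) ⊕ Fin 1) → ℝ) :
    ∑ y ∈ (specialGraph n).neighborFinset (Sum.inl 0), f y
      = ∑ j, f (Sum.inr (Sum.inl j)) + f (Sum.inr (Sum.inr 0)) := by
  rw [neighborFinset_eq_filter, Finset.sum_filter]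
  simp [Fintype.sum_sum_type, specialGraph, graphJoin]

theorem sum_neighborFinset_specialGraph_clique (f : Fin 1 ⊕ (Fin (n - 2) ⊕ Fin 1) → ℝ)
    (i : Fin (n - 2)) :
    ∑ y ∈ (specialGraph n).neighborFinset (Sum.inr (Sum.inl i)), f y
      = f (Sum.inl 0) + ∑ j, f (Sum.inr (Sum.inl j)) - f (Sum.inr (Sum.inl i)) := by
  rw [neighborFinset_eq_filter, Finset.sum_filter]
  simp only [Fintype.sum_sum_type, specialGraph, graphJoin]
  simp [add_sub_assoc, ← Finset.sum_erase_eq_sub (Finset.mem_univ i), Finset.sum_ite,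
    ← Finset.filter_ne]

theorem sum_neighborFinset_specialGraph_pendant (f : Fin 1 ⊕ (Fin (n - 2) ⊕ Fin 1) → ℝ) :
    ∑ y ∈ (specialGraph n).neighborFinset (Sum.inr (Sum.inr 0)), f y = f (Sum.inl 0) := by
  rw [neighborFinset_eq_filter, Finset.sum_filter]
  simp [Fintype.sum_sum_type, specialGraph, graphJoin]

theorem specialGraph_mulVec_clique (α : ℝ) (hn : 2 ≤ n) (v : Fin 1 ⊕ (Fin (n - 2) ⊕ Fin 1) → ℝ)
    (i : Fin (n - 2)) :
    (aAlphaMatrix α (specialGraph n) *ᵥ v) (Sum.inr (Sum.inl i))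
      = (α * (n - 2) - (1 - α)) * v (Sum.inr (Sum.inl i))
        + (1 - α) * (v (Sum.inl 0) + ∑ j, v (Sum.inr (Sum.inl j))) := by
  rw [aAlphaMatrix_mulVec_apply, sum_neighborFinset_specialGraph_clique]
  simp [Finset.sum_add_distrib, ← Finset.mul_sum, Nat.cast_sub hn]
  ring

/-- The vector with value `x 0` on the apex, `x 1` on the clique `K_{n-2}` and `x 2` on the
pendant vertex. -/
def blockVector (n : ℕ) (x : Fin 3 → ℝ) : Fin 1 ⊕ (Fin (n - 2) ⊕ Fin 1) → ℝ :=
  Sum.elim (fun _ => x 0) (Sum.elim (fun _ => x 1) (fun _ => x 2))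

theorem blockVector_injective (hn : 3 ≤ n) : Function.Injective (blockVector n) := by
  intro x y h
  have hi : 0 < n - 2 := by omega
  ext k
  fin_cases k
  · exact congrFun h (Sum.inl 0)
  · exact congrFun h (Sum.inr (Sum.inl ⟨0, hi⟩))
  · exact congrFun h (Sum.inr (Sum.inr 0))

theorem blockVector_zero : blockVector n 0 = 0 := by
  ext (_ | _ | _) <;> rfl

theorem blockVector_smul (c : ℝ) (x : Fin 3 → ℝ) :
    blockVector n (c • x) = c • blockVector n x := by
  ext (_ | _ | _) <;> rfl

/-- The quotient matrix of `Aα(K_1 ∨ (K_{n-2} ∪ K_1))` for the equitable partition into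
apex, clique and pendant vertex. -/
def specialQuotientMatrix (α : ℝ) (n : ℕ) : Matrix (Fin 3) (Fin 3) ℝ :=
  !![α * (n - 1), (1 - α) * (n - 2), 1 - α;
     1 - α, α * (n - 2) + (1 - α) * (n - 3), 0;
     1 - α, 0, α]

theorem specialGraph_mulVec_blockVector (α : ℝ) (hn : 2 ≤ n) (x : Fin 3 → ℝ) :
    aAlphaMatrix α (specialGraph n) *ᵥ blockVector n x
      = blockVector n (specialQuotientMatrix α n *ᵥ x) := by
  ext (i | i | i)
  · rw [Subsingleton.elim i 0, aAlphaMatrix_mulVec_apply, sum_neighborFinset_specialGraph_apex]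
    simp [blockVector, specialQuotientMatrix, mulVec, dotProduct, Fin.sum_univ_three,
      Nat.cast_sub hn]
    ring
  · rw [specialGraph_mulVec_clique α hn]
    simp [blockVector, specialQuotientMatrix, mulVec, dotProduct, Fin.sum_univ_three,
      Nat.cast_sub hn]
    ring
  · rw [Subsingleton.elim i 0, aAlphaMatrix_mulVec_apply, sum_neighborFinset_specialGraph_pendant]
    simp [blockVector, specialQuotientMatrix, mulVec, dotProduct, Fin.sum_univ_three]
    ring

end SpecialGraph

noncomputable def specialCubic (α : ℝ) (n : ℕ) (x : ℝ) : ℝ :=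
  x ^ 3 - (α * n + n + α - 3) * x ^ 2
    + (α * n ^ 2 + α ^ 2 * n - α * n - n - 2 * α + 1) * x
    - α ^ 2 * n ^ 2 + 3 * α ^ 2 * n - α * n + n - 4 * α ^ 2 + 5 * α - 3

section SpecialSpectrum

variable {α μ : ℝ} {n : ℕ}

theorem mem_spectrum_specialQuotientMatrix_iff :
    μ ∈ spectrum ℝ (specialQuotientMatrix α n) ↔ specialCubic α n μ = 0 := by
  have hdet : (algebraMap ℝ _ μ - specialQuotientMatrix α n).det = specialCubic α n μ := by
    simp [Algebra.algebraMap_eq_smul_one, det_fin_three, specialQuotientMatrix, specialCubic]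
    ring
  rw [spectrum.mem_iff, isUnit_iff_isUnit_det, isUnit_iff_ne_zero, not_not, hdet]

theorem mem_spectrum_specialGraph_of_specialCubic_eq_zero (hn : 3 ≤ n)
    (hμ : specialCubic α n μ = 0) : μ ∈ spectrum ℝ (aAlphaMatrix α (specialGraph n)) := by
  obtain ⟨x, hx, hQx⟩ := (mem_spectrum_iff_exists_mulVec_eq_smul _ μ).1
    (mem_spectrum_specialQuotientMatrix_iff.2 hμ)
  refine (mem_spectrum_iff_exists_mulVec_eq_smul _ μ).2 ⟨blockVector n x, ?_, ?_⟩
  · rw [← blockVector_zero]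
    exact (blockVector_injective hn).ne hx
  · rw [specialGraph_mulVec_blockVector α (by omega), hQx, blockVector_smul]

theorem specialCubic_eq_zero_or_of_mem_spectrum (hn : 3 ≤ n)
    (hμ : μ ∈ spectrum ℝ (aAlphaMatrix α (specialGraph n))) :
    specialCubic α n μ = 0 ∨ μ = α * (n - 1) - 1 := by
  obtain ⟨v, hv, hAv⟩ := (mem_spectrum_iff_exists_mulVec_eq_smul _ μ).1 hμ
  by_cases hconst : ∀ i j, v (Sum.inr (Sum.inl i)) = v (Sum.inr (Sum.inl j))
  · left
    set x : Fin 3 → ℝ :=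
      ![v (Sum.inl 0), v (Sum.inr (Sum.inl ⟨0, by omega⟩)), v (Sum.inr (Sum.inr 0))]
    have hvx : v = blockVector n x := by
      ext (i | i | i)
      · rw [Subsingleton.elim i 0]; rfl
      · exact hconst i _
      · rw [Subsingleton.elim i 0]; rfl
    rw [← mem_spectrum_specialQuotientMatrix_iff, mem_spectrum_iff_exists_mulVec_eq_smul]
    refine ⟨x, fun hx => hv (by rw [hvx, hx, blockVector_zero]), blockVector_injective hn ?_⟩
    rw [← specialGraph_mulVec_blockVector α (by omega), ← hvx, hAv, blockVector_smul, ← hvx]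
  · right
    push Not at hconst
    obtain ⟨i, j, hij⟩ := hconst
    have hi := congrFun hAv (Sum.inr (Sum.inl i))
    have hj := congrFun hAv (Sum.inr (Sum.inl j))
    rw [specialGraph_mulVec_clique α (by omega), Pi.smul_apply, smul_eq_mul] at hi hj
    have hdiff : (α * (n - 1) - 1 - μ) * (v (Sum.inr (Sum.inl i)) - v (Sum.inr (Sum.inl j)))
        = 0 := by
      linear_combination hi - hj
    linarith [(mul_eq_zero.1 hdiff).resolve_right (sub_ne_zero.2 hij)]

end SpecialSpectrum

section SpecialCubic

variable {α : ℝ} {n : ℕ}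

theorem specialCubic_sub_two_neg (hα0 : 0 ≤ α) (hα1 : α < 1) (hn : 3 ≤ n) :
    specialCubic α n (n - 2) < 0 := by
  have hn' : (3 : ℝ) ≤ n := by exact_mod_cast hn
  have hval : specialCubic α n (n - 2) = -((1 - α) * (α * (n - 4) + 1)) := by
    unfold specialCubic; ring
  rw [hval, neg_neg_iff_pos]
  exact mul_pos (by linarith) (by nlinarith)

theorem specialCubic_sub_one_pos (hα1 : α < 1) (hn : 3 ≤ n) :
    0 < specialCubic α n (n - 1) := by
  have hn' : (3 : ℝ) ≤ n := by exact_mod_cast hn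
  have hval : specialCubic α n (n - 1) = (1 - α) * (n - 2) * (n + 1 - 2 * α) := by
    unfold specialCubic; ring
  rw [hval]
  exact mul_pos (mul_pos (by linarith) (by linarith)) (by linarith)

theorem exists_specialCubic_eq_zero_ge (hα0 : 0 ≤ α) (hα1 : α < 1) (hn : 3 ≤ n) :
    ∃ x, specialCubic α n x = 0 ∧ (n : ℝ) - 2 ≤ x := by
  obtain ⟨x, hx, hroot⟩ := intermediate_value_Icc (by linarith : (n : ℝ) - 2 ≤ n - 1)
    (by unfold specialCubic; fun_prop : Continuous (specialCubic α n)).continuousOn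
    ⟨(specialCubic_sub_two_neg hα0 hα1 hn).le, (specialCubic_sub_one_pos hα1 hn).le⟩
  exact ⟨x, hroot, hx.1⟩

end SpecialCubic

/-- For `0 ≤ α < 1` and `n ≥ 3`, `λ_α(K_1 ∨ (K_{n−2} ∪ K_1))` is the largest real root of
`φ(x) = x³ − (αn + n + α − 3)x² + (αn² + α²n − αn − n − 2α + 1)x − α²n² + 3α²n − αn + n
− 4α² + 5α − 3`. -/
theorem lambdaAlpha_specialGraph_root (α : ℝ) (hα0 : 0 ≤ α) (hα1 : α < 1)
    (n : ℕ) (hn : 3 ≤ n) :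
    ((lambdaAlpha α (specialGraph n)) ^ 3
        - (α * n + n + α - 3) * (lambdaAlpha α (specialGraph n)) ^ 2
        + (α * n ^ 2 + α ^ 2 * n - α * n - n - 2 * α + 1) * lambdaAlpha α (specialGraph n)
        - α ^ 2 * n ^ 2 + 3 * α ^ 2 * n - α * n + n - 4 * α ^ 2 + 5 * α - 3 = 0) ∧
    ∀ x : ℝ,
      x ^ 3 - (α * n + n + α - 3) * x ^ 2
        + (α * n ^ 2 + α ^ 2 * n - α * n - n - 2 * α + 1) * x
        - α ^ 2 * n ^ 2 + 3 * α ^ 2 * n - α * n + n - 4 * α ^ 2 + 5 * α - 3 = 0 →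
      x ≤ lambdaAlpha α (specialGraph n) := by
  obtain ⟨hmem, hmax⟩ := isGreatest_lambdaAlpha α (specialGraph n)
  obtain ⟨x₀, hx₀, hx₀_ge⟩ := exists_specialCubic_eq_zero_ge hα0 hα1 hn
  have hx₀_le := hmax (mem_spectrum_specialGraph_of_specialCubic_eq_zero hn hx₀)
  refine ⟨?_, fun x hx => hmax (mem_spectrum_specialGraph_of_specialCubic_eq_zero hn hx)⟩
  refine (specialCubic_eq_zero_or_of_mem_spectrum hn hmem).resolve_right fun h => ?_
  have hgap : α * (n - 1) - 1 < (n : ℝ) - 2 := by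
    have hn' : (3 : ℝ) ≤ n := by exact_mod_cast hn
    nlinarith
  linarith
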